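/- (Uniform matroid example) Fix n ≥ 1 and 1 ≤ d < n, and let T = {F ⊆ {1,…,n} : |F| ≤ d} be the independence complex of the uniform matroid U_n^d, whose minimal nonfaces are the (d+1)-element subsets of {1,…,n}. Let S be the simplicial complex on vertex set {1,…,n+1} whose minimal nonfaces are the sets J ∪ {n+1} for J ⊆ {1,…,n} with |J| = d + 1. Then S satisfies property I with witnesses the (d+1)-element subsets of {1,…,n}, its auxiliary complex T(S) equals T, and χ_c(S)(t) = t^{n+1} · Σ_{j=0}^{d} (n choose j) t^{−j} (1 − t^{−1})^{n−j} in ℤ[t,t⁻¹]. -/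

import Mathlib

open Finset LaurentPolynomial

noncomputable section

/-- The union `σ_I = ⋃_{i ∈ I} σ_i`. -/
def unionOver {ι V : Type*} [DecidableEq V] (σ : ι → Finset V) (I : Finset ι) : Finset V :=
  I.sup σ

/-- The intersection graph `G_I` on the vertex set `I`. -/
def interGraph {ι V : Type*} [DecidableEq V] (σ : ι → Finset V) (I : Finset ι) :
    SimpleGraph {i // i ∈ I} where
  Adj i j := i ≠ j ∧ (σ i.1 ∩ σ j.1).Nonempty
  symm := by
    refine ⟨?_⟩
    intro i j h
    exact ⟨h.1.symm, by rw [Finset.inter_comm]; exact h.2⟩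
  loopless := ⟨by intro i h; exact h.1 rfl⟩

/-- `c(I)`, the number of connected components of `G_I`. -/
def compCount {ι V : Type*} [DecidableEq V] (σ : ι → Finset V) (I : Finset ι) : ℕ :=
  Nat.card (interGraph σ I).ConnectedComponent

/-- Property I. -/
def PropertyI {ι V W : Type*} [DecidableEq V] [DecidableEq W]
    (σ : ι → Finset V) (α : ι → Finset W) : Prop :=
  (∀ i, (α i).card + 1 = (σ i).card) ∧
  ∀ I : Finset ι, I.Nonempty → ∀ p ∉ I,
    (unionOver σ I ∩ σ p = ∅ → unionOver α I ∩ α p = ∅) ∧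
    ((unionOver σ I ∩ σ p).Nonempty →
      (unionOver α I ∩ α p).card + 1 = (unionOver σ I ∩ σ p).card)

/-- The simplicial chromatic polynomial. -/
def simpChrom {ι : Type*} [Fintype ι] [DecidableEq ι] {n : ℕ} (σ : ι → Finset (Fin n)) :
    LaurentPolynomial ℤ :=
  T (n : ℤ) +
  ∑ I ∈ (univ : Finset ι).powerset.filter (fun I => I.Nonempty),
    (-1) ^ I.card *
      T ((n : ℤ) - ((unionOver σ I).card : ℤ) + (compCount σ I : ℤ))

/-- Faces of the complex whose minimal nonfaces are the `α i`. -/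
def facesOf {ι : Type*} [Fintype ι] {N : ℕ} (α : ι → Finset (Fin N)) :
    Finset (Finset (Fin N)) :=
  (univ : Finset (Finset (Fin N))).filter (fun F => ∀ i, ¬ α i ⊆ F)

/-- Coefficient of `t^k` in a Laurent polynomial. -/
def lcoeff (p : LaurentPolynomial ℤ) (k : ℤ) : ℤ := p.coeff k

end

/-!
Every minimal nonface of `S` is a cone `J ∪ {n+1}` over a minimal nonface `J` of `T`. All cones
share the apex, so every intersection graph `G_I` is connected and `|σ_I| = |α_I| + 1`; this gives
property I and reduces `χ_c(S)` to `t^{n+1} Σ_I (-1)^{|I|} u^{|α_I|}` with `u = t⁻¹`. Writing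
`u^{|U|} = Σ_{G ⊇ U} u^{|G|} (1 - u)^{n - |G|}` and applying inclusion–exclusion turns this into
the sum of `u^{|G|} (1 - u)^{n - |G|}` over the faces `G` of `T`, i.e. over the sets of size `≤ d`.
-/

section Cone

variable {n : ℕ}

def cone (A : Finset (Fin n)) : Finset (Fin (n + 1)) :=
  insert (Fin.last n) (A.image Fin.castSucc)

theorem last_mem_cone (A : Finset (Fin n)) : Fin.last n ∈ cone A :=
  mem_insert_self _ _

theorem card_cone (A : Finset (Fin n)) : #(cone A) = #A + 1 := by
  rw [cone, card_insert_of_notMem, card_image_of_injective _ (Fin.castSucc_injective n)]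
  simp [Fin.castSucc_ne_last]

theorem cone_inter_cone (A B : Finset (Fin n)) : cone A ∩ cone B = cone (A ∩ B) := by
  rw [cone, cone, cone, ← insert_inter_distrib, image_inter _ _ (Fin.castSucc_injective n)]

theorem cone_union_cone (A B : Finset (Fin n)) : cone A ∪ cone B = cone (A ∪ B) := by
  rw [cone, cone, cone, ← insert_union_distrib, image_union]

theorem unionOver_cone {ι : Type*} (α : ι → Finset (Fin n)) {I : Finset ι} (hI : I.Nonempty) :
    unionOver (fun i => cone (α i)) I = cone (unionOver α I) := by
  rw [unionOver, unionOver, ← sup'_eq_sup hI, ← sup'_eq_sup hI,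
    apply_sup'_eq_sup'_comp hI cone fun A B => (cone_union_cone A B).symm]
  rfl

end Cone

theorem compCount_eq_one_of_forall_mem {ι V : Type*} [DecidableEq V] (σ : ι → Finset V)
    {I : Finset ι} (hI : I.Nonempty) {x : V} (hx : ∀ i, x ∈ σ i) : compCount σ I = 1 := by
  have hpre : (interGraph σ I).Preconnected := fun v w => by
    by_cases h : v = w
    · exact h ▸ SimpleGraph.Reachable.refl _
    · exact SimpleGraph.Adj.reachable ⟨h, x, mem_inter.mpr ⟨hx _, hx _⟩⟩
  obtain ⟨i, hi⟩ := hI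
  rw [compCount, Nat.card_eq_one_iff_unique]
  exact ⟨hpre.subsingleton_connectedComponent,
    ⟨SimpleGraph.connectedComponentMk _ ⟨i, hi⟩⟩⟩

theorem propertyI_cone {ι : Type*} {n : ℕ} (α : ι → Finset (Fin n)) :
    PropertyI (fun i => cone (α i)) α := by
  refine ⟨fun i => (card_cone _).symm, fun I hI p _ => ⟨fun h => ?_, fun _ => ?_⟩⟩
  · have hlast : Fin.last n ∈ unionOver (fun i => cone (α i)) I ∩ cone (α p) := by
      rw [unionOver_cone α hI]
      exact mem_inter.mpr ⟨last_mem_cone _, last_mem_cone _⟩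
    simp [h] at hlast
  · rw [unionOver_cone α hI, cone_inter_cone, card_cone]

theorem simpChrom_cone {ι : Type*} [Fintype ι] [DecidableEq ι] {n : ℕ}
    (α : ι → Finset (Fin n)) :
    simpChrom (fun i => cone (α i)) =
      T ((n : ℤ) + 1) * ∑ I ∈ (univ : Finset ι).powerset,
        (-1) ^ #I * T (-1) ^ #(unionOver α I) := by
  have hterm (I : Finset ι) :
      T ((n : ℤ) + 1) * ((-1 : ℤ[T;T⁻¹]) ^ #I * T (-1) ^ #(unionOver α I)) =
        (-1) ^ #I * T ((n : ℤ) + 1 - #(unionOver α I)) := by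
    rw [T_pow, mul_left_comm, ← T_add]
    congr 2
    ring
  have hnonempty : (univ : Finset ι).powerset.filter (fun I => I.Nonempty) =
      (univ : Finset ι).powerset.erase ∅ := by
    ext I
    simp [nonempty_iff_ne_empty, and_comm]
  rw [mul_sum, ← add_sum_erase _ _ (empty_mem_powerset _), simpChrom, ← hnonempty]
  refine congrArg₂ _ (by simp [unionOver]) (sum_congr rfl fun I hI => ?_)
  have hI := (mem_filter.mp hI).2
  rw [hterm, compCount_eq_one_of_forall_mem _ hI fun i => last_mem_cone (α i),
    unionOver_cone α hI, card_cone]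
  push_cast
  ring_nf

section InclusionExclusion

variable {R : Type*} [CommRing R]

theorem sum_Icc_univ_pow_mul_one_sub_pow {V : Type*} [Fintype V] [DecidableEq V]
    (U : Finset V) (u : R) :
    ∑ G ∈ Icc U univ, u ^ #G * (1 - u) ^ (Fintype.card V - #G) = u ^ #U := by
  have hdisj : ∀ H ∈ (univ \ U).powerset, Disjoint U H := fun H hH =>
    disjoint_of_subset_right (mem_powerset.mp hH) disjoint_sdiff
  have hinj : Set.InjOn (U ∪ ·) ((univ \ U).powerset : Set (Finset V)) := by
    intro H₁ h₁ H₂ h₂ h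
    rw [← union_sdiff_cancel_left (hdisj H₁ h₁), ← union_sdiff_cancel_left (hdisj H₂ h₂)]
    exact congrArg (· \ U) h
  have hcard : #(univ \ U) = Fintype.card V - #U := by
    rw [card_sdiff_of_subset (subset_univ U), card_univ]
  rw [Icc_eq_image_powerset (subset_univ U), sum_image hinj]
  calc ∑ H ∈ (univ \ U).powerset, u ^ #(U ∪ H) * (1 - u) ^ (Fintype.card V - #(U ∪ H))
      = u ^ #U * ∑ H ∈ (univ \ U).powerset, u ^ #H * (1 - u) ^ (#(univ \ U) - #H) := by
        rw [mul_sum]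
        refine sum_congr rfl fun H hH => ?_
        rw [card_union_of_disjoint (hdisj H hH), pow_add, hcard, Nat.sub_sub, mul_assoc]
    _ = u ^ #U := by rw [sum_pow_mul_eq_add_pow, add_sub_cancel, one_pow, mul_one]

theorem sum_powerset_neg_one_pow_mul_pow_card_unionOver {ι : Type*} [Fintype ι] {N : ℕ}
    (α : ι → Finset (Fin N)) (u : R) :
    ∑ I ∈ (univ : Finset ι).powerset, (-1) ^ #I * u ^ #(unionOver α I) =
      ∑ G ∈ facesOf α, u ^ #G * (1 - u) ^ (N - #G) := by
  classical
  have hinf (I : Finset ι) : I.inf (fun i => Icc (α i) univ) = Icc (unionOver α I) univ := by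
    ext G
    simp [mem_inf, unionOver]
  have hfaces : univ.inf (fun i => (Icc (α i) univ)ᶜ) = facesOf α := by
    ext G
    simp [mem_inf, facesOf]
  rw [← hfaces, inclusion_exclusion_sum_inf_compl]
  refine sum_congr rfl fun I _ => ?_
  have hsup := sum_Icc_univ_pow_mul_one_sub_pow (unionOver α I) u
  rw [Fintype.card_fin] at hsup
  rw [hinf, hsup, zsmul_eq_mul, Int.cast_pow, Int.cast_neg, Int.cast_one]

end InclusionExclusion

theorem forall_not_subset_iff_card_le {V : Type*} (F : Finset V) (d : ℕ) :
    (∀ J : {J : Finset V // #J = d + 1}, ¬ (J : Finset V) ⊆ F) ↔ #F ≤ d := by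
  rw [← Nat.lt_succ_iff, ← powersetCard_eq_empty, eq_empty_iff_forall_notMem]
  simp [mem_powersetCard, imp_not_comm]

theorem sum_card_le_eq_sum_choose {V M : Type*} [Fintype V] [AddCommMonoid M] (d : ℕ)
    (f : ℕ → M) :
    ∑ G : Finset V with #G ≤ d, f #G = ∑ j ∈ range (d + 1), (Fintype.card V).choose j • f j := by
  rw [← sum_fiberwise_of_maps_to' (t := range (d + 1)) (by simp)]
  refine sum_congr rfl fun j hj => ?_
  have hfiber :
      ((univ : Finset (Finset V)).filter (#· ≤ d)).filter (#· = j) = powersetCard j univ := by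
    ext G
    simp only [mem_filter, mem_univ, true_and, mem_powersetCard, subset_univ]
    have := mem_range.mp hj
    omega
  rw [sum_const, hfiber, card_powersetCard, card_univ]

theorem stmt_19_general (n d : ℕ)
    (σ : {J : Finset (Fin n) // J.card = d + 1} → Finset (Fin (n + 1)))
    (hσ : ∀ J, σ J = insert (Fin.last n) ((J : Finset (Fin n)).image Fin.castSucc)) :
    PropertyI σ (fun J => (J : Finset (Fin n))) ∧
    (∀ F : Finset (Fin n),
      (∀ J : {J : Finset (Fin n) // J.card = d + 1}, ¬ (J : Finset (Fin n)) ⊆ F) ↔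
        F.card ≤ d) ∧
    simpChrom σ =
      T ((n : ℤ) + 1) *
        ∑ j ∈ Finset.range (d + 1),
          (n.choose j : LaurentPolynomial ℤ) * (T (-(j : ℤ)) * (1 - T (-1)) ^ (n - j)) := by
  obtain rfl : σ = fun J : {J : Finset (Fin n) // #J = d + 1} => cone (J : Finset (Fin n)) :=
    funext hσ
  have hfaces (F : Finset (Fin n)) := forall_not_subset_iff_card_le F d
  have huniform : facesOf (fun J : {J : Finset (Fin n) // #J = d + 1} => (J : Finset (Fin n))) =
      univ.filter (#· ≤ d) :=
    filter_congr fun F _ => hfaces F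
  refine ⟨propertyI_cone _, hfaces, ?_⟩
  rw [simpChrom_cone, sum_powerset_neg_one_pow_mul_pow_card_unionOver, huniform,
    sum_card_le_eq_sum_choose d fun j => T (-1) ^ j * (1 - T (-1)) ^ (n - j), Fintype.card_fin]
  refine congrArg _ (sum_congr rfl fun j _ => ?_)
  rw [nsmul_eq_mul, T_pow, mul_neg_one]

/-- uniform matroid example: for `1 ≤ d < n`, let `T` be the independence
complex of `U_n^d` (faces: subsets of `{1,…,n}` of cardinality `≤ d`), whose minimal
nonfaces are the `(d+1)`-element subsets.  Let `S` be the complex on `{1,…,n+1}` whose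
minimal nonfaces are the sets `J ∪ {n+1}` with `|J| = d+1`.  Then `S` satisfies property I
with witnesses the `(d+1)`-subsets, `T(S) = T`, and
`χ_c(S)(t) = t^{n+1} · Σ_{j=0}^{d} (n choose j) t^{−j} (1 − t^{−1})^{n−j}`. -/
theorem stmt_19 (n d : ℕ) (hn : 1 ≤ n) (hd1 : 1 ≤ d) (hdn : d < n)
    (σ : {J : Finset (Fin n) // J.card = d + 1} → Finset (Fin (n + 1)))
    (hσ : ∀ J, σ J = insert (Fin.last n) ((J : Finset (Fin n)).image Fin.castSucc)) :
    PropertyI σ (fun J => (J : Finset (Fin n))) ∧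
    (∀ F : Finset (Fin n),
      (∀ J : {J : Finset (Fin n) // J.card = d + 1}, ¬ (J : Finset (Fin n)) ⊆ F) ↔
        F.card ≤ d) ∧
    simpChrom σ =
      T ((n : ℤ) + 1) *
        ∑ j ∈ Finset.range (d + 1),
          (n.choose j : LaurentPolynomial ℤ) * (T (-(j : ℤ)) * (1 - T (-1)) ^ (n - j)) :=
  stmt_19_general n d σ hσ
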